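/- Let M_R and M_I be 2×2 complex matrices, let U_D be the DQW time evolution on ℓ²(ℤ;ℂ²), and let Ũ be the 4-state LQW time evolution on ℓ²(ℤ;ℝ⁴) associated with the 4×4 real block matrix M̃ = [[ℜM_R, −ℑM_I],[ℑM_R, ℜM_I]]. Then the map ι : ℓ²(ℤ;ℂ²) → ℓ²(ℤ;ℝ⁴), (ιΨ)(x) = (ℜΨ₁(x), ℜΨ₂(x), ℑΨ₁(x), ℑΨ₂(x))ᵀ, is a bijective ℝ-linear isometry, Ũ = ι∘U_D∘ι⁻¹, and consequently for every n ≥ 0 and x ∈ ℤ, ‖(U_DⁿΨ₀)(x)‖²_{ℂ²} = ‖(Ũⁿ ιΨ₀)(x)‖²_{ℝ⁴}; that is, the DQW and its corresponding 4-state LQW have identical probability measures. -/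

import Mathlib

/-!
Since `M_R` and `M_I` act on the real vectors `ℜΨ` and `ℑΨ`, the real and imaginary parts of
`M_R ℜΨ + i M_I ℑΨ` are `ℜM_R ℜΨ − ℑM_I ℑΨ` and `ℑM_R ℜΨ + ℜM_I ℑΨ`: these are exactly the block
rows of `M̃` applied to `ιΨ`, and the shift moves the real and imaginary parts of each component
together. Hence `ι ∘ U_D = Ũ ∘ ι`, which iterates, and `ι` preserves `|z|² = (ℜz)² + (ℑz)²`
pointwise.
-/

open Matrix

noncomputable section

/-- The time evolution `U_D = S∘C_D` of the 2-state DQW on `ℤ` with coin pair `(M_R, M_I)`. -/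
def dqwU (MR MI : Matrix (Fin 2) (Fin 2) ℂ) (Ψ : ℤ → Fin 2 → ℂ) : ℤ → Fin 2 → ℂ := fun x =>
  (Matrix.of ![MR 0, (0 : Fin 2 → ℂ)]).mulVec (fun i => (((Ψ (x + 1) i).re : ℝ) : ℂ))
    + (Matrix.of ![(0 : Fin 2 → ℂ), MR 1]).mulVec (fun i => (((Ψ (x - 1) i).re : ℝ) : ℂ))
    + Complex.I •
      ((Matrix.of ![MI 0, (0 : Fin 2 → ℂ)]).mulVec (fun i => (((Ψ (x + 1) i).im : ℝ) : ℂ))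
        + (Matrix.of ![(0 : Fin 2 → ℂ), MI 1]).mulVec (fun i => (((Ψ (x - 1) i).im : ℝ) : ℂ)))

/-- The 4×4 real block matrix `M̃ = [[ℜM_R, −ℑM_I],[ℑM_R, ℜM_I]]`. -/
def Mtilde (MR MI : Matrix (Fin 2) (Fin 2) ℂ) : Matrix (Fin 4) (Fin 4) ℝ :=
  !![(MR 0 0).re, (MR 0 1).re, -(MI 0 0).im, -(MI 0 1).im;
     (MR 1 0).re, (MR 1 1).re, -(MI 1 0).im, -(MI 1 1).im;
     (MR 0 0).im, (MR 0 1).im, (MI 0 0).re, (MI 0 1).re;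
     (MR 1 0).im, (MR 1 1).im, (MI 1 0).re, (MI 1 1).re]

/-- The time evolution of the 4-state LQW on `ℤ` over `ℝ` with coin matrix `M̃`:
`(Ũψ)(x) = P̃·ψ(x+1) + Q̃·ψ(x−1)`, where `P̃` retains rows 1 and 3 of `M̃` and `Q̃`
retains rows 2 and 4. -/
def lqwU4 (M : Matrix (Fin 4) (Fin 4) ℝ) (ψ : ℤ → Fin 4 → ℝ) : ℤ → Fin 4 → ℝ := fun x =>
  (Matrix.of ![M 0, (0 : Fin 4 → ℝ), M 2, (0 : Fin 4 → ℝ)]).mulVec (ψ (x + 1))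
    + (Matrix.of ![(0 : Fin 4 → ℝ), M 1, (0 : Fin 4 → ℝ), M 3]).mulVec (ψ (x - 1))

/-- The map `ι : ℓ²(ℤ;ℂ²) → ℓ²(ℤ;ℝ⁴)`,
`(ιΨ)(x) = (ℜΨ₁(x), ℜΨ₂(x), ℑΨ₁(x), ℑΨ₂(x))ᵀ`. -/
def iota (Ψ : ℤ → Fin 2 → ℂ) : ℤ → Fin 4 → ℝ := fun x =>
  ![(Ψ x 0).re, (Ψ x 1).re, (Ψ x 0).im, (Ψ x 1).im]

def iotaInv (ψ : ℤ → Fin 4 → ℝ) : ℤ → Fin 2 → ℂ := fun x =>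
  ![⟨ψ x 0, ψ x 2⟩, ⟨ψ x 1, ψ x 3⟩]

theorem iotaInv_iota : Function.LeftInverse iotaInv iota := by
  intro Ψ
  funext x i
  fin_cases i <;> rfl

theorem iota_iotaInv : Function.RightInverse iotaInv iota := by
  intro ψ
  funext x i
  fin_cases i <;> rfl

theorem iota_bijective : Function.Bijective iota :=
  ⟨iotaInv_iota.injective, iota_iotaInv.surjective⟩

theorem iota_add (Ψ Φ : ℤ → Fin 2 → ℂ) : iota (Ψ + Φ) = iota Ψ + iota Φ := by
  funext x i
  fin_cases i <;> simp [iota]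

theorem iota_smul (c : ℝ) (Ψ : ℤ → Fin 2 → ℂ) : iota (c • Ψ) = c • iota Ψ := by
  funext x i
  fin_cases i <;> simp [iota]

theorem sum_normSq_eq_sum_iota_sq (Ψ : ℤ → Fin 2 → ℂ) (x : ℤ) :
    ∑ i, Complex.normSq (Ψ x i) = ∑ i, iota Ψ x i ^ 2 := by
  rw [Fin.sum_univ_two, Fin.sum_univ_four, Complex.normSq_apply, Complex.normSq_apply]
  change _ = (Ψ x 0).re ^ 2 + (Ψ x 1).re ^ 2 + (Ψ x 0).im ^ 2 + (Ψ x 1).im ^ 2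
  ring

theorem lqwU4_apply (M : Matrix (Fin 4) (Fin 4) ℝ) (ψ : ℤ → Fin 4 → ℝ) (x : ℤ) :
    lqwU4 M ψ x = ![M 0 ⬝ᵥ ψ (x + 1), M 1 ⬝ᵥ ψ (x - 1), M 2 ⬝ᵥ ψ (x + 1), M 3 ⬝ᵥ ψ (x - 1)] := by
  funext i
  fin_cases i <;> simp [lqwU4]

theorem dqwU_apply (MR MI : Matrix (Fin 2) (Fin 2) ℂ) (Ψ : ℤ → Fin 2 → ℂ) (x : ℤ) :
    dqwU MR MI Ψ x =
      ![MR 0 ⬝ᵥ (fun j => ((Ψ (x + 1) j).re : ℂ))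
          + Complex.I * (MI 0 ⬝ᵥ fun j => ((Ψ (x + 1) j).im : ℂ)),
        MR 1 ⬝ᵥ (fun j => ((Ψ (x - 1) j).re : ℂ))
          + Complex.I * (MI 1 ⬝ᵥ fun j => ((Ψ (x - 1) j).im : ℂ))] := by
  funext i
  fin_cases i <;> simp [dqwU]

theorem re_dotProduct_ofReal_add_I_mul {n : Type*} [Fintype n] (r s : n → ℂ) (a b : n → ℝ) :
    (r ⬝ᵥ (fun j => (a j : ℂ)) + Complex.I * (s ⬝ᵥ fun j => (b j : ℂ))).re
      = ∑ j, ((r j).re * a j - (s j).im * b j) := by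
  rw [Finset.sum_sub_distrib]
  simp [dotProduct, Complex.re_sum, sub_eq_add_neg]

theorem im_dotProduct_ofReal_add_I_mul {n : Type*} [Fintype n] (r s : n → ℂ) (a b : n → ℝ) :
    (r ⬝ᵥ (fun j => (a j : ℂ)) + Complex.I * (s ⬝ᵥ fun j => (b j : ℂ))).im
      = ∑ j, ((r j).im * a j + (s j).re * b j) := by
  simp [dotProduct, Complex.im_sum, Finset.sum_add_distrib]

theorem semiconj_iota_dqwU (MR MI : Matrix (Fin 2) (Fin 2) ℂ) :
    Function.Semiconj iota (dqwU MR MI) (lqwU4 (Mtilde MR MI)) := by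
  intro Ψ
  funext x i
  rw [lqwU4_apply]
  change ![(dqwU MR MI Ψ x 0).re, (dqwU MR MI Ψ x 1).re, (dqwU MR MI Ψ x 0).im,
    (dqwU MR MI Ψ x 1).im] i = _
  simp only [dqwU_apply, cons_val_zero, cons_val_one, re_dotProduct_ofReal_add_I_mul,
    im_dotProduct_ofReal_add_I_mul]
  fin_cases i <;>
    simp only [Fin.zero_eta, Fin.mk_one, Fin.reduceFinMk, cons_val_zero, cons_val_one, cons_val,
      cons_val', cons_val_fin_one, Fin.sum_univ_two, Fin.sum_univ_four, dotProduct, Mtilde,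
      of_apply, iota] <;>
    ring

/-- `ι` is a bijective ℝ-linear isometry intertwining the DQW evolution `U_D` and the 4-state
LQW evolution `Ũ` with coin `M̃`; consequently the DQW and its corresponding 4-state LQW have
identical probability measures. -/
theorem dqw_to_four_state_lqw (MR MI : Matrix (Fin 2) (Fin 2) ℂ) :
    Function.Bijective iota ∧
      (∀ Ψ Φ : ℤ → Fin 2 → ℂ, iota (Ψ + Φ) = iota Ψ + iota Φ) ∧
      (∀ (c : ℝ) (Ψ : ℤ → Fin 2 → ℂ), iota (c • Ψ) = c • iota Ψ) ∧
      (∀ (Ψ : ℤ → Fin 2 → ℂ) (x : ℤ),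
        ∑ i, Complex.normSq (Ψ x i) = ∑ i, iota Ψ x i ^ 2) ∧
      (∀ Ψ : ℤ → Fin 2 → ℂ, lqwU4 (Mtilde MR MI) (iota Ψ) = iota (dqwU MR MI Ψ)) ∧
      (∀ (Ψ₀ : ℤ → Fin 2 → ℂ) (n : ℕ) (x : ℤ),
        ∑ i, Complex.normSq (((dqwU MR MI)^[n] Ψ₀) x i)
          = ∑ i, ((lqwU4 (Mtilde MR MI))^[n] (iota Ψ₀)) x i ^ 2) := by
  have hsemiconj := semiconj_iota_dqwU MR MI
  refine ⟨iota_bijective, iota_add, iota_smul, sum_normSq_eq_sum_iota_sq,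
    fun Ψ => (hsemiconj Ψ).symm, fun Ψ₀ n x => ?_⟩
  rw [← (hsemiconj.iterate_right n) Ψ₀, sum_normSq_eq_sum_iota_sq]

end
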